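/- (Classification of solutions for n = 13, one smaller multiplicity.) Define S : ℤ² → ℤ² by S(d, m) = (−649d − 2340m − 1965, −180d − 649m − 545). Then S is a bijection of ℤ² mapping the set of integer solutions (d, m) of (2d+3)² − 13(2m+1)² + 8m = −4 onto itself, and every integer solution (d, m) of this equation has the form S^j(s) for some j ∈ ℤ and some s ∈ {(−3, 0), (0, 0)}. -/

import Mathlib

/-- The affine transformation `S(d, m) = (-649d - 2340m - 1965, -180d - 649m - 545)`
of `ℤ²`, as a bijection (its linear part has determinant `(-649)² - 2340·180 = 1`). -/
def S : Equiv.Perm (ℤ × ℤ) where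
  toFun p := (-649 * p.1 - 2340 * p.2 - 1965, -180 * p.1 - 649 * p.2 - 545)
  invFun p := (-649 * p.1 + 2340 * p.2 + 15, 180 * p.1 - 649 * p.2 - 5)
  left_inv := by intro ⟨a, b⟩; simp only [Prod.mk.injEq]; constructor <;> ring
  right_inv := by intro ⟨a, b⟩; simp only [Prod.mk.injEq]; constructor <;> ring

/-- The solution set of `(2d+3)² - 13(2m+1)² + 8m = -4`. -/
def Sol13' : Set (ℤ × ℤ) :=
  {p | (2 * p.1 + 3) ^ 2 - 13 * (2 * p.2 + 1) ^ 2 + 8 * p.2 = -4}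

lemma S_mem {p : ℤ × ℤ} (hp : p ∈ Sol13') : S p ∈ Sol13' := by
  simp only [Sol13', Set.mem_setOf_eq, S, Equiv.coe_fn_mk] at hp ⊢
  linear_combination hp

lemma Ssymm_mem {p : ℤ × ℤ} (hp : p ∈ Sol13') : S.symm p ∈ Sol13' := by
  simp only [Sol13', Set.mem_setOf_eq, S, Equiv.coe_fn_symm_mk] at hp ⊢
  linear_combination hp

lemma base_case {p : ℤ × ℤ} (hp : p ∈ Sol13') (hb : (2 * p.1 + 3).natAbs ≤ 9) :
    p = (-3, 0) ∨ p = (0, 0) := by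
  obtain ⟨d, m⟩ := p
  simp only [Sol13', Set.mem_setOf_eq] at hp
  have hd1 : -6 ≤ d := by omega
  have hd2 : d ≤ 3 := by omega
  have h81 : (2 * d + 3) ^ 2 ≤ 81 := by nlinarith [hd1, hd2]
  have hm1 : -1 ≤ m := by nlinarith [sq_nonneg (m + 1), h81]
  have hm2 : m ≤ 0 := by nlinarith [sq_nonneg m, h81]
  simp only [Prod.mk.injEq]
  interval_cases m <;> interval_cases d <;> revert hp <;> norm_num

lemma descent {p : ℤ × ℤ} (hp : p ∈ Sol13') (h10 : 10 ≤ (2 * p.1 + 3).natAbs) :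
    (2 * (S p).1 + 3).natAbs < (2 * p.1 + 3).natAbs ∨
    (2 * (S.symm p).1 + 3).natAbs < (2 * p.1 + 3).natAbs := by
  obtain ⟨d, m⟩ := p
  simp only [Sol13', Set.mem_setOf_eq] at hp
  set x : ℤ := 2 * d + 3 with hxdef
  set u : ℤ := 26 * m + 11 with hudef
  have hu : u ^ 2 = 13 * x ^ 2 + 4 := by rw [hxdef, hudef]; linear_combination -13 * hp
  have hx2 : 100 ≤ x ^ 2 := by
    have : x ≤ -10 ∨ 10 ≤ x := by simp only [hxdef]; omega
    rcases this with h | h <;> nlinarith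
  have hS1 : 2 * (S (d, m)).1 + 3 = -649 * x - 180 * u := by
    simp only [S, Equiv.coe_fn_mk, hxdef, hudef]; ring
  have hS2 : 2 * (S.symm (d, m)).1 + 3 = -649 * x + 180 * u := by
    simp only [S, Equiv.coe_fn_symm_mk, hxdef, hudef]; ring
  rcases le_or_gt (x * u) 0 with h | h
  · left
    rw [Int.natAbs_lt_iff_sq_lt, hS1]
    nlinarith [hu, hx2, h, sq_nonneg (x ^ 2 - 100)]
  · right
    rw [Int.natAbs_lt_iff_sq_lt, hS2]
    nlinarith [hu, hx2, h, sq_nonneg (x ^ 2 - 100)]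

lemma key : ∀ n : ℕ, ∀ p ∈ Sol13', (2 * p.1 + 3).natAbs ≤ n →
    ∃ (j : ℤ) (s : ℤ × ℤ), s ∈ ({(-3, 0), (0, 0)} : Set (ℤ × ℤ)) ∧ p = (S ^ j) s := by
  intro n
  induction n with
  | zero => intro p hp h0; exfalso; omega
  | succ n ih =>
    intro p hp h
    by_cases hb : (2 * p.1 + 3).natAbs ≤ 9
    · rcases base_case hp hb with h | h
      · exact ⟨0, (-3, 0), by simp, by simp [h]⟩
      · exact ⟨0, (0, 0), by simp, by simp [h]⟩
    · have h10 : 10 ≤ (2 * p.1 + 3).natAbs := by omega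
      rcases descent hp h10 with hlt | hlt
      · obtain ⟨j, s, hs, hq⟩ := ih (S p) (S_mem hp) (by omega)
        refine ⟨j - 1, s, hs, ?_⟩
        have h1 : p = S.symm (S p) := (S.symm_apply_apply p).symm
        rw [h1, hq]
        show S⁻¹ ((S ^ j) s) = (S ^ (j - 1)) s
        rw [← Equiv.Perm.mul_apply]
        congr 1
        group
      · obtain ⟨j, s, hs, hq⟩ := ih (S.symm p) (Ssymm_mem hp) (by omega)
        refine ⟨j + 1, s, hs, ?_⟩
        have h1 : p = S (S.symm p) := (S.apply_symm_apply p).symm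
        rw [h1, hq]
        show S ((S ^ j) s) = (S ^ (j + 1)) s
        rw [show S ((S ^ j) s) = (S * S ^ j) s from rfl]
        congr 1
        group

/-- Classification of solutions for `n = 13`, one smaller multiplicity: `S` is a
bijection of `ℤ²` mapping the solution set of `(2d+3)² - 13(2m+1)² + 8m = -4`
onto itself, and every solution is `S^j(s)` for some `j ∈ ℤ` and some
fundamental solution `s ∈ {(-3,0), (0,0)}`. -/
theorem classification_13_one_smaller :
    Function.Bijective (⇑S) ∧
    (⇑S) '' Sol13' = Sol13' ∧
    ∀ p ∈ Sol13', ∃ (j : ℤ) (s : ℤ × ℤ),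
      s ∈ ({(-3, 0), (0, 0)} : Set (ℤ × ℤ)) ∧ p = (S ^ j) s := by
  refine ⟨S.bijective, ?_, fun p hp => key _ p hp le_rfl⟩
  ext p
  constructor
  · rintro ⟨q, hq, rfl⟩; exact S_mem hq
  · intro hp; exact ⟨S.symm p, Ssymm_mem hp, S.apply_symm_apply p⟩
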